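/- arXiv:1005.1095 — 2 statements merged into one kernel-verified Lean document; each statement's English description precedes it below -/
import Mathlib

section
/- Let u be a C² solution of the equivariant Adkins–Nappi equation on r > 0. Then ∂_t(r³ u_t u_r) - ∂_r[ (r³/2)(u_t² + u_r²) - r sin²u - (1/(2r))(u - sin u cos u)² ] = (r²/2)(u_r² - 3u_t²) + sin²u - (1/(2r²))(u - sin u cos u)². -/
open Real

theorem stmt_7 (u : ℝ → ℝ → ℝ)
    (hu : ContDiff ℝ 2 (Function.uncurry u))
    (ut : ℝ → ℝ → ℝ) (ur : ℝ → ℝ → ℝ)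
    (hut : ∀ t r, ut t r = deriv (fun s => u s r) t)
    (hur : ∀ t r, ur t r = deriv (fun ρ => u t ρ) r)
    (heq : ∀ t r, 0 < r →
      deriv (fun s => ut s r) t - deriv (fun ρ => ur t ρ) r - (2 / r) * ur t r
        + (1 / r ^ 2) * Real.sin (2 * u t r)
        + (1 / r ^ 4) * (u t r - Real.sin (u t r) * Real.cos (u t r))
            * (1 - Real.cos (2 * u t r)) = 0)
    (t r : ℝ) (hr : 0 < r) :
    deriv (fun s => r ^ 3 * ut s r * ur s r) t
      - deriv (fun ρ => ρ ^ 3 / 2 * ((ut t ρ) ^ 2 + (ur t ρ) ^ 2)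
          - ρ * Real.sin (u t ρ) ^ 2
          - 1 / (2 * ρ) * (u t ρ - Real.sin (u t ρ) * Real.cos (u t ρ)) ^ 2) r
      = r ^ 2 / 2 * ((ur t r) ^ 2 - 3 * (ut t r) ^ 2) + Real.sin (u t r) ^ 2
        - 1 / (2 * r ^ 2) * (u t r - Real.sin (u t r) * Real.cos (u t r)) ^ 2 := by
  set F : ℝ × ℝ → ℝ := Function.uncurry u with hF
  have hF1 : Differentiable ℝ F := hu.differentiable two_ne_zero
  have hF2 : Differentiable ℝ (fderiv ℝ F) :=
    (hu.fderiv_right (m := 1) one_add_one_eq_two.le).differentiable one_ne_zero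
  have lineT : ∀ (s ρ : ℝ), HasDerivAt (fun x : ℝ => (x, ρ)) ((1:ℝ), (0:ℝ)) s :=
    fun s ρ => (hasDerivAt_id s).prodMk (hasDerivAt_const s ρ)
  have lineR : ∀ (s ρ : ℝ), HasDerivAt (fun x : ℝ => ((s:ℝ), x)) ((0:ℝ), (1:ℝ)) ρ :=
    fun s ρ => (hasDerivAt_const ρ s).prodMk (hasDerivAt_id ρ)
  have hUt : ∀ s ρ, HasDerivAt (fun x => u x ρ) (fderiv ℝ F (s, ρ) (1, 0)) s :=
    fun s ρ => by have := (hF1 (s, ρ)).hasFDerivAt.comp_hasDerivAt s (lineT s ρ); exact this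
  have hUr : ∀ s ρ, HasDerivAt (fun x => u s x) (fderiv ℝ F (s, ρ) (0, 1)) ρ :=
    fun s ρ => (hF1 (s, ρ)).hasFDerivAt.comp_hasDerivAt ρ (lineR s ρ)
  have hut' : ∀ s ρ, ut s ρ = fderiv ℝ F (s, ρ) (1, 0) :=
    fun s ρ => (hut s ρ).trans (hUt s ρ).deriv
  have hur' : ∀ s ρ, ur s ρ = fderiv ℝ F (s, ρ) (0, 1) :=
    fun s ρ => (hur s ρ).trans (hUr s ρ).deriv
  have hDT : ∀ (v : ℝ × ℝ) (s ρ : ℝ),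
      HasDerivAt (fun x => fderiv ℝ F (x, ρ) v)
        (fderiv ℝ (fderiv ℝ F) (s, ρ) (1, 0) v) s := by
    intro v s ρ
    have h1 : HasDerivAt (fun x => fderiv ℝ F (x, ρ))
        (fderiv ℝ (fderiv ℝ F) (s, ρ) (1, 0)) s :=
      (hF2 (s, ρ)).hasFDerivAt.comp_hasDerivAt s (lineT s ρ)
    exact (ContinuousLinearMap.apply ℝ ℝ v).hasFDerivAt.comp_hasDerivAt s h1
  have hDR : ∀ (v : ℝ × ℝ) (s ρ : ℝ),
      HasDerivAt (fun x => fderiv ℝ F (s, x) v)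
        (fderiv ℝ (fderiv ℝ F) (s, ρ) (0, 1) v) ρ := by
    intro v s ρ
    have h1 : HasDerivAt (fun x => fderiv ℝ F (s, x))
        (fderiv ℝ (fderiv ℝ F) (s, ρ) (0, 1)) ρ :=
      (hF2 (s, ρ)).hasFDerivAt.comp_hasDerivAt ρ (lineR s ρ)
    exact (ContinuousLinearMap.apply ℝ ℝ v).hasFDerivAt.comp_hasDerivAt ρ h1
  have hsymm : fderiv ℝ (fderiv ℝ F) (t, r) (0, 1) (1, 0)
      = fderiv ℝ (fderiv ℝ F) (t, r) (1, 0) (0, 1) :=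
    second_derivative_symmetric (fun y => (hF1 y).hasFDerivAt)
      ((hF2 (t, r)).hasFDerivAt) (0, 1) (1, 0)
  -- first deriv
  have e1 : (fun s => r ^ 3 * ut s r * ur s r)
      = fun s => r ^ 3 * (fderiv ℝ F (s, r) (1, 0)) * (fderiv ℝ F (s, r) (0, 1)) := by
    funext s; rw [hut' s r, hur' s r]
  have H1 := ((hasDerivAt_const t (r ^ 3)).mul (hDT (1, 0) t r)).mul (hDT (0, 1) t r)
  -- second deriv
  have e2 : (fun ρ => ρ ^ 3 / 2 * ((ut t ρ) ^ 2 + (ur t ρ) ^ 2)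
          - ρ * Real.sin (u t ρ) ^ 2
          - 1 / (2 * ρ) * (u t ρ - Real.sin (u t ρ) * Real.cos (u t ρ)) ^ 2)
      = fun ρ => ρ ^ 3 / 2 * ((fderiv ℝ F (t, ρ) (1, 0)) ^ 2 + (fderiv ℝ F (t, ρ) (0, 1)) ^ 2)
          - ρ * Real.sin (u t ρ) ^ 2
          - 1 / (2 * ρ) * (u t ρ - Real.sin (u t ρ) * Real.cos (u t ρ)) ^ 2 := by
    funext ρ; rw [hut' t ρ, hur' t ρ]
  have hne : (2 : ℝ) * r ≠ 0 := by positivity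
  have Hcube := (hasDerivAt_pow 3 r).div_const 2
  have Hsum := ((hDR (1, 0) t r).pow 2).add ((hDR (0, 1) t r).pow 2)
  have Hterm2 := (hasDerivAt_id' r).mul ((hUr t r).sin.pow 2)
  have HW := (hUr t r).sub ((hUr t r).sin.mul (hUr t r).cos)
  have Hinv := (hasDerivAt_const r (1:ℝ)).div ((hasDerivAt_id' r).const_mul 2) hne
  have H2 := ((Hcube.mul Hsum).sub Hterm2).sub (Hinv.mul (HW.pow 2))
  simp only [Pi.mul_def, Pi.add_def, Pi.sub_def, Pi.pow_def, Pi.div_def] at H1 H2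
  rw [e1, e2, H1.deriv, H2.deriv, hut' t r, hur' t r]
  have E := heq t r hr
  rw [show (fun s => ut s r) = fun s => fderiv ℝ F (s, r) (1, 0) from
        funext fun s => hut' s r,
      show (fun ρ => ur t ρ) = fun ρ => fderiv ℝ F (t, ρ) (0, 1) from
        funext fun ρ => hur' t ρ,
      (hDT (1, 0) t r).deriv, (hDR (0, 1) t r).deriv, hur' t r,
      Real.sin_two_mul, Real.cos_two_mul] at E
  rw [hsymm]
  have hs := Real.sin_sq_add_cos_sq (u t r)
  set U := u t r
  set a := fderiv ℝ F (t, r) (1, 0)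
  set b := fderiv ℝ F (t, r) (0, 1)
  set att := fderiv ℝ (fderiv ℝ F) (t, r) (1, 0) (1, 0)
  set m := fderiv ℝ (fderiv ℝ F) (t, r) (1, 0) (0, 1)
  set brr := fderiv ℝ (fderiv ℝ F) (t, r) (0, 1) (0, 1)
  field_simp at E ⊢
  linear_combination (2 * r * b) * E + (2 * r * b * (U - Real.sin U * Real.cos U)) * hs
end

section
/- The function u(t,r) = 2 arctan(r/(T₀ - t)), for t < T₀, solves the equivariant wave map equation u_tt - u_rr - (2/r) u_r + (1/r²) sin 2u = 0 on r > 0. -/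
open Real Filter

private lemma sin_two_arctan (x : ℝ) :
    Real.sin (2 * Real.arctan x) = 2 * x / (1 + x ^ 2) := by
  have h : Real.sqrt (1 + x ^ 2) ^ 2 = 1 + x ^ 2 := Real.sq_sqrt (by positivity)
  have hs : Real.sqrt (1 + x ^ 2) ≠ 0 := by positivity
  rw [Real.sin_two_mul, Real.sin_arctan, Real.cos_arctan]
  field_simp
  rw [h]

private lemma cos_two_arctan (x : ℝ) :
    Real.cos (2 * Real.arctan x) = (1 - x ^ 2) / (1 + x ^ 2) := by
  have h1 : (0:ℝ) < 1 + x ^ 2 := by positivity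
  rw [Real.cos_two_mul, Real.cos_sq_arctan]
  field_simp
  ring

/-- The Shatah / Turok–Spergel solution `u(t,r) = 2 arctan (r/(T₀-t))` solves
the 3+1 equivariant wave map equation. -/
theorem stmt_19 (T₀ : ℝ) (t r : ℝ) (ht : t < T₀) (hr : 0 < r) :
    deriv (fun s => deriv (fun s' => 2 * Real.arctan (r / (T₀ - s'))) s) t
      - deriv (fun ρ => deriv (fun ρ' => 2 * Real.arctan (ρ' / (T₀ - t))) ρ) r
      - (2 / r) * deriv (fun ρ => 2 * Real.arctan (ρ / (T₀ - t))) r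
      + (1 / r ^ 2) * Real.sin (2 * (2 * Real.arctan (r / (T₀ - t)))) = 0 := by
  have hT : 0 < T₀ - t := sub_pos.mpr ht
  have hTne : T₀ - t ≠ 0 := hT.ne'
  set T : ℝ := T₀ - t with hTdef
  -- spatial first derivative
  have hs1 : ∀ ρ : ℝ, HasDerivAt (fun ρ' => 2 * Real.arctan (ρ' / T))
      (2 * (1 / (1 + (ρ / T) ^ 2) * (1 / T))) ρ := by
    intro ρ
    have h := ((Real.hasDerivAt_arctan (ρ / T)).comp ρ ((hasDerivAt_id ρ).div_const T)).const_mul 2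
    simpa [one_div] using h
  have hur : deriv (fun ρ => 2 * Real.arctan (ρ / T)) r
      = 2 * (1 / (1 + (r / T) ^ 2) * (1 / T)) := (hs1 r).deriv
  -- spatial second derivative
  have hfun1 : (fun ρ => deriv (fun ρ' => 2 * Real.arctan (ρ' / T)) ρ)
      = fun ρ => 2 * ((1 + (ρ / T) ^ 2)⁻¹ * (1 / T)) := by
    funext ρ
    rw [(hs1 ρ).deriv, one_div]
  have hden : ∀ ρ : ℝ, (1 : ℝ) + (ρ / T) ^ 2 ≠ 0 := fun ρ => by positivity
  have hs2 : HasDerivAt (fun ρ => 2 * ((1 + (ρ / T) ^ 2)⁻¹ * (1 / T)))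
      (2 * ((-(2 * (r / T) ^ 1 * (1 / T)) / (1 + (r / T) ^ 2) ^ 2) * (1 / T))) r := by
    have h0 : HasDerivAt (fun ρ : ℝ => 1 + (ρ / T) ^ 2) (2 * (r / T) ^ 1 * (1 / T)) r := by
      have := (((hasDerivAt_id r).div_const T).pow 2).const_add 1
      simpa [one_div] using this
    exact ((h0.inv (hden r)).mul_const (1 / T)).const_mul 2
  have hurr : deriv (fun ρ => deriv (fun ρ' => 2 * Real.arctan (ρ' / T)) ρ) r
      = 2 * ((-(2 * (r / T) ^ 1 * (1 / T)) / (1 + (r / T) ^ 2) ^ 2) * (1 / T)) := by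
    rw [hfun1]; exact hs2.deriv
  -- time first derivative, valid for s < T₀
  have ht1 : ∀ s : ℝ, s < T₀ → deriv (fun s' => 2 * Real.arctan (r / (T₀ - s'))) s
      = 2 * r / ((T₀ - s) ^ 2 + r ^ 2) := by
    intro s hs
    have hne : T₀ - s ≠ 0 := (sub_pos.mpr hs).ne'
    have h0 : HasDerivAt (fun s' : ℝ => T₀ - s') (-1) s := by
      simpa using (hasDerivAt_id s).const_sub T₀
    have hdiv : HasDerivAt (fun s' => r / (T₀ - s'))
        ((0 * (T₀ - s) - r * (-1)) / (T₀ - s) ^ 2) s :=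
      (hasDerivAt_const s r).div h0 hne
    have harc : HasDerivAt (fun s' => 2 * Real.arctan (r / (T₀ - s')))
        (2 * (1 / (1 + (r / (T₀ - s)) ^ 2) * ((0 * (T₀ - s) - r * (-1)) / (T₀ - s) ^ 2))) s := by
      simpa [Function.comp_def] using
        ((Real.hasDerivAt_arctan (r / (T₀ - s))).comp s hdiv).const_mul 2
    rw [harc.deriv]
    have hd : (1 : ℝ) + (r / (T₀ - s)) ^ 2 ≠ 0 := by positivity
    field_simp
    ring
  -- time second derivative
  have hev : (fun s => deriv (fun s' => 2 * Real.arctan (r / (T₀ - s'))) s)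
      =ᶠ[nhds t] (fun s => 2 * r / ((T₀ - s) ^ 2 + r ^ 2)) := by
    filter_upwards [eventually_lt_nhds ht] with s hs using ht1 s hs
  have hDne : ∀ s : ℝ, (T₀ - s) ^ 2 + r ^ 2 ≠ 0 := fun s => by positivity
  have ht2 : HasDerivAt (fun s => 2 * r * (((T₀ - s) ^ 2 + r ^ 2)⁻¹))
      (2 * r * (-(2 * (T₀ - t) ^ 1 * (-1)) / ((T₀ - t) ^ 2 + r ^ 2) ^ 2)) t := by
    have h0 : HasDerivAt (fun s : ℝ => (T₀ - s) ^ 2 + r ^ 2) (2 * (T₀ - t) ^ 1 * (-1)) t := by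
      have hb : HasDerivAt (fun s : ℝ => T₀ - s) (-1) t := by
        simpa using (hasDerivAt_id t).const_sub T₀
      simpa using (hb.pow 2).add_const (r ^ 2)
    exact (h0.inv (hDne t)).const_mul (2 * r)
  have hutt : deriv (fun s => deriv (fun s' => 2 * Real.arctan (r / (T₀ - s'))) s) t
      = 2 * r * (-(2 * (T₀ - t) ^ 1 * (-1)) / ((T₀ - t) ^ 2 + r ^ 2) ^ 2) := by
    rw [hev.deriv_eq]
    have : (fun s => 2 * r / ((T₀ - s) ^ 2 + r ^ 2))
        = fun s => 2 * r * (((T₀ - s) ^ 2 + r ^ 2)⁻¹) := by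
      funext s; rw [div_eq_mul_inv]
    rw [this]; exact ht2.deriv
  -- the sine term
  have hsin : Real.sin (2 * (2 * Real.arctan (r / T)))
      = 2 * (2 * (r / T) / (1 + (r / T) ^ 2)) * ((1 - (r / T) ^ 2) / (1 + (r / T) ^ 2)) := by
    rw [Real.sin_two_mul, sin_two_arctan, cos_two_arctan]
  rw [hutt, hurr, hur, hsin]
  have h1 : (1 : ℝ) + (r / T) ^ 2 ≠ 0 := hden r
  have h2 : T ^ 2 + r ^ 2 ≠ 0 := by positivity
  have hTne' : T ≠ 0 := hTne
  have hrne : r ≠ 0 := hr.ne'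
  rw [hTdef] at *
  field_simp
  ring
end
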